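/- Let I be a filtered category and p : I → Poly a diagram in which every structure map is cartesian. Then for any polynomial functor q, the canonical map colim_i (p_i ◁ q) → (colim_i p_i) ◁ q is an isomorphism. -/

import Mathlib

universe v u

open CategoryTheory Limits

/-- A morphism of polynomial functors: forwards on positions, backwards on directions. -/
structure PolyHom (p q : PFunctor.{u}) : Type u where
  onPos : p.A → q.A
  onDir : ∀ a : p.A, q.B (onPos a) → p.B a

/-- The category `Poly` of polynomial endofunctors on `Set` and natural transformations
between them (presented position/direction-wise). -/
instance : Category PFunctor.{u} where
  Hom := PolyHom
  id p := ⟨fun a => a, fun _ d => d⟩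
  comp φ ψ := ⟨fun a => ψ.onPos (φ.onPos a), fun a d => φ.onDir a (ψ.onDir (φ.onPos a) d)⟩
  id_comp _ := rfl
  comp_id _ := rfl
  assoc _ _ _ := rfl

/-- Post-composition `q ↦ p ◁ q` with a fixed polynomial `p`, as a functor `Poly ⥤ Poly`.
(`PFunctor.comp p q` is the composite functor `p ∘ q`.) -/
def compL (p : PFunctor.{u}) : PFunctor.{u} ⥤ PFunctor.{u} where
  obj q := p.comp q
  map φ :=
    { onPos := fun x => ⟨x.1, fun b => φ.onPos (x.2 b)⟩
      onDir := fun x d => ⟨d.1, φ.onDir (x.2 d.1) d.2⟩ }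
  map_id _ := rfl
  map_comp _ _ := rfl

/-- Pre-composition `p ↦ p ◁ q` with a fixed polynomial `q`, as a functor `Poly ⥤ Poly`. -/
def compR (q : PFunctor.{u}) : PFunctor.{u} ⥤ PFunctor.{u} where
  obj p := p.comp q
  map φ :=
    { onPos := fun x => ⟨φ.onPos x.1, fun b => x.2 (φ.onDir x.1 b)⟩
      onDir := fun x d => ⟨φ.onDir x.1 d.1, d.2⟩ }
  map_id _ := rfl
  map_comp _ _ := rfl

/-- Evaluation of polynomial functors at a set `X`, as a functor `Poly ⥤ Set`. -/
def evalPoly (X : Type u) : PFunctor.{u} ⥤ Type u where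
  obj p := p.Obj X
  map φ := TypeCat.ofHom fun x => ⟨φ.onPos x.1, fun d => x.2 (φ.onDir x.1 d)⟩
  map_id _ := rfl
  map_comp _ _ := rfl

/-- A map of polynomial functors is cartesian if all the backwards maps on directions
are bijections (equivalently, all naturality squares are pullbacks). -/
def IsCartesian {p q : PFunctor.{u}} (φ : p ⟶ q) : Prop :=
  ∀ a, Function.Bijective (φ.onDir a)

/-- The wide subcategory `Poly_Cart` of polynomial functors and cartesian maps. -/
def PolyCart : Type (u + 1) := PFunctor.{u}

instance : Category PolyCart.{u} where
  Hom p q := { φ : (show PFunctor.{u} from p) ⟶ (show PFunctor.{u} from q) // IsCartesian φ }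
  id p := ⟨𝟙 _, fun _ => Function.bijective_id⟩
  comp φ ψ := ⟨φ.1 ≫ ψ.1, fun a => (φ.2 a).comp (ψ.2 (φ.1.onPos a))⟩
  id_comp _ := rfl
  comp_id _ := rfl
  assoc _ _ _ := rfl

/-- The inclusion functor `Poly_Cart ⥤ Poly`. -/
def polyCartIncl : PolyCart.{u} ⥤ PFunctor.{u} where
  obj p := p
  map φ := φ.1
  map_id _ := rfl
  map_comp _ _ := rfl

/-!
A cocone over a filtered diagram whose legs are cartesian and whose positions form a colimit of
sets is a colimit in `Poly`: evaluated at any set `X` it is a colimit of sets, because a cartesian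
leg identifies the directions at a position with the directions at its image; as
`Ext : Poly ⥤ Set^Set` is fully faithful and colimits in `Set^Set` are computed pointwise, this
lifts to `Poly`.

Over a diagram of cartesian maps we build one such cocone: its positions are the colimit of the
positions, and its directions at a position are the fibre of the colimit of the total spaces
`Σ x, p_i[x]`, on which cartesian maps act covariantly. Since `- ◁ q` preserves cartesian maps
and the positions of `p ◁ q` are `p(q(1))`, the criterion also applies to the image of this
cocone under `- ◁ q`; the given colimit cocone is isomorphic to it.
-/

def polyPos : PFunctor.{u} ⥤ Type u where
  obj p := p.A
  map φ := ↾φ.onPos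

def constPoly (X : Type u) : PFunctor.{u} := ⟨X, fun _ => PEmpty⟩

theorem constPoly.hom_ext {p : PFunctor.{u}} {X : Type u} {φ ψ : p ⟶ constPoly X}
    (h : φ.onPos = ψ.onPos) : φ = ψ := by
  obtain ⟨f, g⟩ := φ
  obtain ⟨f', g'⟩ := ψ
  obtain rfl : f = f' := h
  exact congrArg (PolyHom.mk f) (funext₂ fun _ e => nomatch e)

def constPolyFunctor : Type u ⥤ PFunctor.{u} where
  obj := constPoly
  map f := ⟨f, fun _ e => nomatch e⟩
  map_id _ := constPoly.hom_ext rfl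
  map_comp _ _ := constPoly.hom_ext rfl

def polyPosAdjunction : polyPos.{u} ⊣ constPolyFunctor.{u} :=
  Adjunction.mkOfHomEquiv
    { homEquiv _ _ :=
        { toFun f := ⟨f, fun _ e => nomatch e⟩
          invFun φ := ↾φ.onPos
          left_inv _ := rfl
          right_inv _ := constPoly.hom_ext rfl }
      homEquiv_naturality_left_symm _ _ := rfl
      homEquiv_naturality_right _ _ := constPoly.hom_ext rfl }

instance : PreservesColimitsOfSize polyPos.{u} :=
  polyPosAdjunction.leftAdjoint_preservesColimits

/-- The functor `Ext : Poly ⥤ Set^Set`. -/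
def polyExt : PFunctor.{u} ⥤ (Type u ⥤ Type u) where
  obj p :=
    { obj X := p.Obj X
      map f := ↾(p.map f)
      map_id _ := rfl
      map_comp _ _ := rfl }
  map φ := { app X := (evalPoly X).map φ }

/-- Yoneda: a natural transformation out of `p` is determined by the images of the generic
elements `⟨a, id⟩ ∈ p(p[a])`. -/
def polyExt.fullyFaithful : polyExt.{u}.FullyFaithful where
  preimage {p _} α :=
    { onPos a := (α.app (p.B a) ⟨a, id⟩).1
      onDir a := (α.app (p.B a) ⟨a, id⟩).2 }
  map_preimage {p _} α := by
    ext X ⟨a, f⟩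
    exact (ConcreteCategory.congr_hom (α.naturality (↾f)) ⟨a, id⟩).symm
  preimage_map _ := rfl

namespace IsCartesian

variable {p r : PFunctor.{u}} {φ : p ⟶ r}

noncomputable def dirEquiv (hφ : IsCartesian φ) (a : p.A) : r.B (φ.onPos a) ≃ p.B a :=
  Equiv.ofBijective _ (hφ a)

@[simp]
theorem onDir_dirEquiv_symm (hφ : IsCartesian φ) (a : p.A) (d : p.B a) :
    φ.onDir a ((hφ.dirEquiv a).symm d) = d :=
  (hφ.dirEquiv a).apply_symm_apply d

@[simp]
theorem dirEquiv_symm_onDir (hφ : IsCartesian φ) (a : p.A) (d : r.B (φ.onPos a)) :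
    (hφ.dirEquiv a).symm (φ.onDir a d) = d :=
  (hφ.dirEquiv a).symm_apply_apply d

theorem eq_of_evalPoly_map_eq (hφ : IsCartesian φ) {X : Type u} {s t : p.Obj X}
    (hst : s.1 = t.1) (h : (evalPoly X).map φ s = (evalPoly X).map φ t) : s = t := by
  obtain ⟨a, f⟩ := s
  obtain ⟨b, g⟩ := t
  obtain rfl : a = b := hst
  have hfg : f ∘ φ.onDir a = g ∘ φ.onDir a := eq_of_heq (Sigma.mk.inj h).2
  rw [(hφ a).2.injective_comp_right hfg]

theorem compR_map (hφ : IsCartesian φ) (q : PFunctor.{u}) : IsCartesian ((compR q).map φ) :=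
  fun x =>
    show Function.Bijective
        (Sigma.map (β₂ := fun b => q.B (x.2 b)) (φ.onDir x.1) fun _ => id) from
      ⟨(hφ x.1).1.sigma_map fun _ => Function.injective_id,
        (hφ x.1).2.sigma_map fun _ => Function.surjective_id⟩

end IsCartesian

section CartesianLegs

variable {I : Type v} [Category.{v} I] [IsFiltered I] {G : I ⥤ PFunctor.{u}} {c : Cocone G}

noncomputable def isColimitEvalPolyOfCartesian (hlegs : ∀ i, IsCartesian (c.ι.app i))
    (hpos : IsColimit (polyPos.mapCocone c)) (X : Type u) :
    IsColimit ((evalPoly X).mapCocone c) := by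
  refine Types.FilteredColimit.isColimitOf _ _ ?_ ?_
  · rintro ⟨a, f⟩
    obtain ⟨i, x, rfl⟩ := Types.jointly_surjective_of_isColimit hpos a
    refine ⟨i, ⟨x, f ∘ ((hlegs i).dirEquiv x).symm⟩, ?_⟩
    exact Sigma.ext rfl <| heq_of_eq <| funext fun d =>
      congrArg f ((hlegs i).dirEquiv_symm_onDir x d).symm
  · rintro i j ⟨x, f⟩ ⟨y, g⟩ h
    obtain ⟨k, u, v, huv⟩ :=
      (Types.FilteredColimit.isColimit_eq_iff _ hpos).1 (congrArg Sigma.fst h)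
    refine ⟨k, u, v, (hlegs k).eq_of_evalPoly_map_eq huv ?_⟩
    have hu := ConcreteCategory.congr_hom (((evalPoly X).mapCocone c).w u) ⟨x, f⟩
    have hv := ConcreteCategory.congr_hom (((evalPoly X).mapCocone c).w v) ⟨y, g⟩
    exact hu.trans (h.trans hv.symm)

noncomputable def isColimitOfCartesian (hlegs : ∀ i, IsCartesian (c.ι.app i))
    (hpos : IsColimit (polyPos.mapCocone c)) : IsColimit c :=
  haveI := polyExt.fullyFaithful.{u}.full
  haveI := polyExt.fullyFaithful.{u}.faithful
  isColimitOfReflects polyExt <| evaluationJointlyReflectsColimits _ fun X =>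
    isColimitEvalPolyOfCartesian hlegs hpos X

end CartesianLegs

noncomputable def totalSpace : PolyCart.{u} ⥤ Type u where
  obj p := PFunctor.Idx p
  map φ := ↾fun s => ⟨φ.1.onPos s.1, (φ.2.dirEquiv s.1).symm s.2⟩
  map_id p := by
    ext ⟨a, d⟩
    exact Sigma.ext rfl (heq_of_eq ((𝟙 p : p ⟶ p).2.dirEquiv_symm_onDir a d))
  map_comp φ ψ := by
    ext ⟨a, d⟩
    refine Sigma.ext rfl (heq_of_eq (((φ ≫ ψ).2.dirEquiv a).symm_apply_eq.2 ?_))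
    show d = φ.1.onDir a (ψ.1.onDir _ ((ψ.2.dirEquiv _).symm ((φ.2.dirEquiv a).symm d)))
    simp

theorem eq_of_totalSpace_map_eq {p r : PolyCart.{u}} (φ : p ⟶ r) {a : p.A} {d d' : p.B a}
    (h : totalSpace.map φ ⟨a, d⟩ = totalSpace.map φ ⟨a, d'⟩) : d = d' :=
  (φ.2.dirEquiv a).symm.injective (eq_of_heq (Sigma.mk.inj h).2)

theorem exists_totalSpace_map_eq {p r : PolyCart.{u}} (φ : p ⟶ r) {a : p.A}
    (s : totalSpace.obj r) (h : s.1 = φ.1.onPos a) :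
    ∃ d : p.B a, totalSpace.map φ ⟨a, d⟩ = s := by
  obtain ⟨_, e⟩ := s
  obtain rfl := h
  exact ⟨φ.1.onDir a e, Sigma.ext rfl (heq_of_eq (φ.2.dirEquiv_symm_onDir a e))⟩

namespace CanonicalCocone

variable {I : Type v} [Category.{v} I] {F : I ⥤ PolyCart.{u}} (c : Cocone (F ⋙ polyCartIncl))

noncomputable def projCoconeTypes : (F ⋙ totalSpace).CoconeTypes where
  pt := c.pt.A
  ι i s := (c.ι.app i).onPos s.1
  ι_naturality u := funext fun s => congrArg (fun φ => PolyHom.onPos φ s.1) (c.w u)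

noncomputable abbrev proj : (F ⋙ totalSpace).ColimitType → c.pt.A :=
  (F ⋙ totalSpace).descColimitType (projCoconeTypes c)

variable {c}

theorem exists_onPos_eq (hpos : IsColimit (polyPos.mapCocone c)) (a : c.pt.A) :
    ∃ i x, (c.ι.app i).onPos x = a :=
  Types.jointly_surjective_of_isColimit hpos a

variable (hpos : IsColimit (polyPos.mapCocone c))

/-- The fibre of `proj c` lives in `Type (max u v)`, so the directions at `a` are taken to be
those at a chosen preimage of `a`. -/
noncomputable def pt : PFunctor.{u} where
  A := c.pt.A
  B a := (F.obj (exists_onPos_eq hpos a).choose).B (exists_onPos_eq hpos a).choose_spec.choose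

variable [IsFiltered I]

noncomputable def fiberEquiv (i : I) (x : (F.obj i).A) {a : c.pt.A}
    (h : (c.ι.app i).onPos x = a) : (F.obj i).B x ≃ {e // proj c e = a} := by
  refine Equiv.ofBijective (fun d => ⟨(F ⋙ totalSpace).ιColimitType i ⟨x, d⟩, h⟩) ⟨?_, ?_⟩
  · intro d d' hdd
    obtain ⟨k, u, hu⟩ :=
      ((F ⋙ totalSpace).ιColimitType_eq_iff_of_isFiltered' _ _).1 (Subtype.mk.inj hdd)
    exact eq_of_totalSpace_map_eq (F.map u) hu
  · rintro ⟨e, rfl⟩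
    obtain ⟨j, ⟨y, d'⟩, rfl⟩ := (F ⋙ totalSpace).ιColimitType_jointly_surjective e
    obtain ⟨k, u, v, huv⟩ := (Types.FilteredColimit.isColimit_eq_iff _ hpos).1 h
    obtain ⟨d, hd⟩ :=
      exists_totalSpace_map_eq (F.map u) (totalSpace.map (F.map v) ⟨y, d'⟩) huv.symm
    exact ⟨d, Subtype.ext ((F ⋙ totalSpace).ιColimitType_eq_of_map_eq_map _ _ u v hd)⟩

theorem onDir_fiberEquiv_symm {i j : I} (u : i ⟶ j) (x : (F.obj i).A)
    (e : (F ⋙ totalSpace).ColimitType)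
    (h : proj c e = (c.ι.app j).onPos ((F.map u).1.onPos x))
    (h' : proj c e = (c.ι.app i).onPos x) :
    (F.map u).1.onDir x ((fiberEquiv hpos j _ rfl).symm ⟨e, h⟩) =
      (fiberEquiv hpos i x rfl).symm ⟨e, h'⟩ := by
  rw [Equiv.eq_symm_apply]
  set w := (fiberEquiv hpos j _ rfl).symm ⟨e, h⟩
  have hw : (F ⋙ totalSpace).ιColimitType j ⟨_, w⟩ = e :=
    congrArg Subtype.val ((fiberEquiv hpos j _ rfl).apply_symm_apply ⟨e, h⟩)
  refine Subtype.ext (((F ⋙ totalSpace).ιColimitType_map u _).symm.trans ?_)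
  refine Eq.trans ?_ hw
  exact congrArg _ (Sigma.ext rfl (heq_of_eq ((F.map u).2.dirEquiv_symm_onDir x w)))

noncomputable def ptDirEquiv (a : c.pt.A) : (pt hpos).B a ≃ {e // proj c e = a} :=
  fiberEquiv hpos _ _ (exists_onPos_eq hpos a).choose_spec.choose_spec

theorem pt.hom_ext {p : PFunctor.{u}} {f g : p ⟶ pt hpos} (hf : ∀ x, f.onPos x = g.onPos x)
    (hdir : ∀ x e (h₁ : proj c e = f.onPos x) (h₂ : proj c e = g.onPos x),
      f.onDir x ((ptDirEquiv hpos _).symm ⟨e, h₁⟩) =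
        g.onDir x ((ptDirEquiv hpos _).symm ⟨e, h₂⟩)) :
    f = g := by
  obtain ⟨fp, fd⟩ := f
  obtain ⟨gp, gd⟩ := g
  obtain rfl : fp = gp := funext hf
  refine congrArg (PolyHom.mk fp) (funext₂ fun x d => ?_)
  simpa using hdir x _ (ptDirEquiv hpos _ d).2 (ptDirEquiv hpos _ d).2

noncomputable def leg (i : I) : (F ⋙ polyCartIncl).obj i ⟶ pt hpos where
  onPos := (c.ι.app i).onPos
  onDir x := (ptDirEquiv hpos _).trans (fiberEquiv hpos i x rfl).symm

theorem leg_onDir_ptDirEquiv_symm (i : I) (x : (F.obj i).A) (e) :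
    (leg hpos i).onDir x ((ptDirEquiv hpos _).symm e) = (fiberEquiv hpos i x rfl).symm e :=
  congrArg (fiberEquiv hpos i x rfl).symm ((ptDirEquiv hpos _).apply_symm_apply e)

theorem leg_isCartesian (i : I) : IsCartesian (leg hpos i) :=
  fun _ => Equiv.bijective _

noncomputable def cocone : Cocone (F ⋙ polyCartIncl) where
  pt := pt hpos
  ι :=
    { app := leg hpos
      naturality i j u := by
        refine (pt.hom_ext hpos (fun x => ?_) fun x e h₁ h₂ => ?_).trans
          (Category.comp_id _).symm
        · exact (congrArg (fun φ => PolyHom.onPos φ x) (c.w u) :)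
        · have hj := leg_onDir_ptDirEquiv_symm hpos j ((F.map u).1.onPos x) ⟨e, h₁⟩
          refine (congrArg ((F.map u).1.onDir x) hj).trans
            ((onDir_fiberEquiv_symm hpos u x e h₁ h₂).trans ?_)
          exact (leg_onDir_ptDirEquiv_symm hpos i x ⟨e, h₂⟩).symm }

def isColimitPolyPos : IsColimit (polyPos.mapCocone (cocone hpos)) := hpos

end CanonicalCocone

/-- Let `I` be a filtered category and `p : I ⥤ Poly` a diagram all of
whose structure maps are cartesian (i.e. a diagram in `Poly_Cart`).  Then for any
polynomial functor `q`, the canonical map `colim_i (p_i ◁ q) → (colim_i p_i) ◁ q` is an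
isomorphism; equivalently, `- ◁ q` sends any colimit cocone of the diagram (taken in
`Poly`) to a colimit cocone. -/
theorem compR_preserves_filtered_cartesian_colimits {I : Type v} [Category.{v} I]
    [IsFiltered I] (F : I ⥤ PolyCart.{u}) (q : PFunctor.{u})
    (c : Cocone (F ⋙ polyCartIncl)) (hc : IsColimit c) :
    Nonempty (IsColimit ((compR q).mapCocone c)) := by
  have hpos := isColimitOfPreserves polyPos hc
  have hlegs := CanonicalCocone.leg_isCartesian hpos
  have hc₀ : IsColimit (CanonicalCocone.cocone hpos) :=
    isColimitOfCartesian hlegs (CanonicalCocone.isColimitPolyPos hpos)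
  have hq : IsColimit ((compR q).mapCocone (CanonicalCocone.cocone hpos)) :=
    isColimitOfCartesian (fun i => (hlegs i).compR_map q)
      (isColimitEvalPolyOfCartesian hlegs (CanonicalCocone.isColimitPolyPos hpos) q.A)
  exact ⟨hq.ofIsoColimit ((Cocone.functoriality _ (compR q)).mapIso (hc₀.uniqueUpToIso hc))⟩
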